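/- Let G be a graph on n vertices with |e(G[S]) − |S|²/4| ≤ C·n^θ·|S| for all S ⊆ V(G), where θ ∈ [1/2,1) and C ≥ 1 is a constant. Then min{ω(G), α(G)} ≥ (1−θ−o(1))·log₂ n as n → ∞. -/

import Mathlib

open scoped Classical

set_option maxHeartbeats 1000000

/-- The number of edges of the subgraph of `G` induced on the vertex set `S`, as a real
number: half the number of ordered adjacent pairs in `S × S`. -/
noncomputable def inducedEdges {V : Type*} [Fintype V] (G : SimpleGraph V)
    (S : Finset V) : ℝ :=
  (((S ×ˢ S).filter fun p => G.Adj p.1 p.2).card : ℝ) / 2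

/-- The independence number of a graph: the clique number of its complement. -/
noncomputable def indepNum {V : Type*} (G : SimpleGraph V) : ℕ := Gᶜ.cliqueNum

lemma inducedEdges_sum {V : Type*} [Fintype V] (G : SimpleGraph V) (S : Finset V) :
    (((S ×ˢ S).filter fun p => G.Adj p.1 p.2).card : ℕ)
      = ∑ v ∈ S, (S.filter (G.Adj v)).card := by
  rw [Finset.card_filter, Finset.sum_product]
  exact Finset.sum_congr rfl fun v _ => (Finset.card_filter _ _).symm

/-- Greedy clique construction: if every induced subgraph has at least
`|S|²/4 - D|S|` edges, then any set of size at least `2^k·4D - 4D` contains a `k`-clique. -/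
lemma greedy_clique {V : Type*} [Fintype V] (G : SimpleGraph V) (D : ℝ) (hD : 1 ≤ D)
    (h : ∀ S : Finset V, (S.card : ℝ) ^ 2 / 4 - D * S.card ≤ inducedEdges G S) :
    ∀ k : ℕ, ∀ S : Finset V, 2 ^ k * (4 * D) ≤ (S.card : ℝ) + 4 * D →
      ∃ T : Finset V, T ⊆ S ∧ G.IsNClique k T := by
  intro k
  induction k with
  | zero => intro S _; exact ⟨∅, Finset.empty_subset _, SimpleGraph.isNClique_empty.mpr rfl⟩
  | succ k ih =>
    intro S hS
    have h2k : (1 : ℝ) ≤ 2 ^ k := one_le_pow₀ (by norm_num)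
    have hpow : (2 : ℝ) ^ (k + 1) = 2 * 2 ^ k := by ring
    have hScard : (4 : ℝ) * D ≤ (S.card : ℝ) := by nlinarith
    have hSne : S.Nonempty := by
      rw [← Finset.card_pos]
      by_contra hc
      push_neg at hc
      interval_cases h : S.card <;> simp_all <;> nlinarith
    -- average degree
    have hsum : ((S.card : ℝ) / 2 - 2 * D) * S.card
        ≤ ∑ v ∈ S, ((S.filter (G.Adj v)).card : ℝ) := by
      have he := h S
      have hcast : (∑ v ∈ S, ((S.filter (G.Adj v)).card : ℝ))
          = (((S ×ˢ S).filter fun p => G.Adj p.1 p.2).card : ℝ) := by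
        rw [inducedEdges_sum]; push_cast; ring
      rw [hcast]
      have : inducedEdges G S
          = (((S ×ˢ S).filter fun p => G.Adj p.1 p.2).card : ℝ) / 2 := rfl
      nlinarith [this ▸ he]
    have hex : ∃ v ∈ S, ((S.card : ℝ) / 2 - 2 * D) ≤ ((S.filter (G.Adj v)).card : ℝ) := by
      apply Finset.exists_le_of_sum_le hSne
      rw [Finset.sum_const, nsmul_eq_mul]; linarith [hsum]
    obtain ⟨v, hvS, hdeg⟩ := hex
    set S' := S.filter (G.Adj v) with hS'
    have hvnot : v ∉ S' := by simp [hS', SimpleGraph.irrefl]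
    have hS'card : 2 ^ k * (4 * D) ≤ (S'.card : ℝ) + 4 * D := by
      have : 2 ^ (k + 1) * (4 * D) ≤ (S.card : ℝ) + 4 * D := hS
      rw [hpow] at this
      nlinarith
    obtain ⟨T, hTsub, hTcl⟩ := ih S' hS'card
    refine ⟨insert v T, ?_, hTcl.insert fun b hb => ?_⟩
    · exact Finset.insert_subset hvS (hTsub.trans (Finset.filter_subset _ _))
    · exact (Finset.mem_filter.mp (hTsub hb)).2

lemma clique_lb {n : ℕ} (G : SimpleGraph (Fin n)) (D : ℝ) (hD : 1 ≤ D)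
    (h : ∀ S : Finset (Fin n), (S.card : ℝ) ^ 2 / 4 - D * S.card ≤ inducedEdges G S)
    (k : ℕ) (hk : 2 ^ k * (4 * D) ≤ (n : ℝ) + 4 * D) : k ≤ G.cliqueNum := by
  obtain ⟨T, _, hTcl⟩ := greedy_clique G D hD h k Finset.univ (by simpa using hk)
  have := @SimpleGraph.IsClique.card_le_cliqueNum (Fin n) G _ T hTcl.isClique
  exact hTcl.card_eq ▸ this

lemma compl_pairs {V : Type*} [Fintype V] (G : SimpleGraph V) (S : Finset V) :
    ((S ×ˢ S).filter fun p => Gᶜ.Adj p.1 p.2).card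
      + ((S ×ˢ S).filter fun p => G.Adj p.1 p.2).card + S.card = S.card * S.card := by
  classical
  have hdiag : ((S ×ˢ S).filter fun p => p.1 = p.2) = S.image fun v => (v, v) := by
    ext ⟨a, b⟩
    simp only [Finset.mem_filter, Finset.mem_product, Finset.mem_image, Prod.mk.injEq]
    constructor
    · rintro ⟨⟨ha, hb⟩, rfl⟩; exact ⟨a, ha, rfl, rfl⟩
    · rintro ⟨v, hv, rfl, rfl⟩; exact ⟨⟨hv, hv⟩, rfl⟩
  have hdiagcard : ((S ×ˢ S).filter fun p => p.1 = p.2).card = S.card := by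
    rw [hdiag]
    exact Finset.card_image_of_injective _ (fun a b h => (Prod.mk.injEq _ _ _ _).mp h |>.1)
  have hsplit : ((S ×ˢ S).filter fun p => ¬ G.Adj p.1 p.2)
      = ((S ×ˢ S).filter fun p => Gᶜ.Adj p.1 p.2)
        ∪ ((S ×ˢ S).filter fun p => p.1 = p.2) := by
    rw [← Finset.filter_or]
    apply Finset.filter_congr
    intro p _
    simp only [SimpleGraph.compl_adj, eq_iff_iff]
    constructor
    · intro hna
      by_cases hpe : p.1 = p.2
      · exact Or.inr hpe
      · exact Or.inl ⟨hpe, hna⟩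
    · rintro (⟨_, hna⟩ | he)
      · exact hna
      · exact fun ha => ha.ne he
  have hdisj : Disjoint ((S ×ˢ S).filter fun p => Gᶜ.Adj p.1 p.2)
      ((S ×ˢ S).filter fun p => p.1 = p.2) := by
    rw [Finset.disjoint_left]
    intro q hq1 hq2
    rw [Finset.mem_filter] at hq1 hq2
    exact hq1.2.ne hq2.2
  have h1 : ((S ×ˢ S).filter fun p => ¬ G.Adj p.1 p.2).card
      = ((S ×ˢ S).filter fun p => Gᶜ.Adj p.1 p.2).card + S.card := by
    rw [hsplit, Finset.card_union_of_disjoint hdisj, hdiagcard]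
  have h2 := Finset.card_filter_add_card_filter_not
    (s := S ×ˢ S) (p := fun p => G.Adj p.1 p.2)
  simp only [Finset.card_product] at h2
  omega

lemma compl_lb {V : Type*} [Fintype V] (G : SimpleGraph V) (S : Finset V) (E : ℝ)
    (hE : 0 ≤ E) (h : inducedEdges G S ≤ (S.card : ℝ) ^ 2 / 4 + E * S.card) :
    (S.card : ℝ) ^ 2 / 4 - (E + 1) * S.card ≤ inducedEdges Gᶜ S := by
  have key := compl_pairs G S
  have keyR : (((S ×ˢ S).filter fun p => Gᶜ.Adj p.1 p.2).card : ℝ)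
      + (((S ×ˢ S).filter fun p => G.Adj p.1 p.2).card : ℝ) + (S.card : ℝ)
      = (S.card : ℝ) * S.card := by exact_mod_cast key
  have hG : inducedEdges G S
      = (((S ×ˢ S).filter fun p => G.Adj p.1 p.2).card : ℝ) / 2 := rfl
  have hGc : inducedEdges Gᶜ S
      = (((S ×ˢ S).filter fun p => Gᶜ.Adj p.1 p.2).card : ℝ) / 2 := by
    simp only [inducedEdges]
    norm_num
  have hSnn : (0 : ℝ) ≤ (S.card : ℝ) := Nat.cast_nonneg _
  nlinarith [hG ▸ h]

/-- fix `θ ∈ [1/2, 1)`, `C ≥ 1`.  For graphs `G` on `n` vertices satisfying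
`|e(G[S]) - |S|²/4| ≤ C n^θ |S|` for all vertex subsets `S`, one has
`min{ω(G), α(G)} ≥ (1-θ-o(1)) log₂ n` as `n → ∞`. -/
theorem stmt9 (θ C : ℝ) (hθ : 1 / 2 ≤ θ) (hθ1 : θ < 1) (hC : 1 ≤ C) :
    ∀ ε > (0 : ℝ), ∃ N : ℕ, ∀ n : ℕ, N ≤ n → ∀ G : SimpleGraph (Fin n),
      (∀ S : Finset (Fin n),
        |inducedEdges G S - (S.card : ℝ) ^ 2 / 4| ≤ C * (n : ℝ) ^ θ * S.card) →
      (1 - θ - ε) * Real.logb 2 n ≤ (min G.cliqueNum (indepNum G) : ℕ) := by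
  intro ε hε
  by_cases hcase : 1 - θ - ε ≤ 0
  · refine ⟨1, fun n hn G _ => ?_⟩
    have hlog : 0 ≤ Real.logb 2 n :=
      Real.logb_nonneg one_lt_two (by exact_mod_cast Nat.one_le_cast.mpr hn)
    calc (1 - θ - ε) * Real.logb 2 n ≤ 0 := mul_nonpos_of_nonpos_of_nonneg hcase hlog
    _ ≤ _ := Nat.cast_nonneg _
  push_neg at hcase
  set M : ℝ := (16 * C) ^ (1 / ε) with hM
  refine ⟨max 2 ⌈M⌉₊, fun n hn G hG => ?_⟩
  have hn2 : 2 ≤ n := le_trans (le_max_left _ _) hn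
  have hnR : (2 : ℝ) ≤ (n : ℝ) := by exact_mod_cast hn2
  have hnpos : (0 : ℝ) < (n : ℝ) := by linarith
  have hn1 : (1 : ℝ) ≤ (n : ℝ) := by linarith
  have hMle : M ≤ (n : ℝ) := by
    have : (⌈M⌉₊ : ℝ) ≤ (n : ℝ) := by
      exact_mod_cast le_trans (le_max_right _ _) hn
    exact le_trans (Nat.le_ceil M) this
  have hMnn : (0 : ℝ) ≤ M := Real.rpow_nonneg (by linarith) _
  have hne : (16 : ℝ) * C ≤ (n : ℝ) ^ ε := by
    calc (16 : ℝ) * C = M ^ ε := by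
          rw [hM, ← Real.rpow_mul (by linarith), one_div_mul_cancel hε.ne',
            Real.rpow_one]
    _ ≤ (n : ℝ) ^ ε := Real.rpow_le_rpow hMnn hMle hε.le
  -- basic powers
  have hθnn : 0 ≤ θ := le_trans (by norm_num) hθ
  have hnθ1 : (1 : ℝ) ≤ (n : ℝ) ^ θ := Real.one_le_rpow hn1 hθnn
  set D : ℝ := C * (n : ℝ) ^ θ + 1 with hD
  have hCn1 : (1:ℝ) ≤ C * (n:ℝ)^θ := by nlinarith
  have hD1 : (1:ℝ) ≤ D := by rw [hD]; nlinarith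
  have hD2 : D ≤ 2 * (C * (n:ℝ)^θ) := by rw [hD]; nlinarith
  have hlbG : ∀ S : Finset (Fin n), (S.card:ℝ)^2/4 - D*S.card ≤ inducedEdges G S := by
    intro S
    have h1 := (abs_le.mp (hG S)).1
    have hSnn : (0:ℝ) ≤ S.card := Nat.cast_nonneg _
    nlinarith
  have hlbGc : ∀ S : Finset (Fin n), (S.card:ℝ)^2/4 - D*S.card ≤ inducedEdges Gᶜ S := by
    intro S
    have h2 := (abs_le.mp (hG S)).2
    have hub : inducedEdges G S ≤ (S.card:ℝ)^2/4 + (C*(n:ℝ)^θ)*S.card := by nlinarith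
    have := compl_lb G S (C*(n:ℝ)^θ) (by positivity) hub
    linarith
  set k : ℕ := ⌈(1 - θ - ε) * Real.logb 2 n⌉₊ with hk
  have hlogpos : 0 ≤ Real.logb 2 n := Real.logb_nonneg one_lt_two hn1
  have hLnn : 0 ≤ (1-θ-ε) * Real.logb 2 n := mul_nonneg hcase.le hlogpos
  have hkle : (k:ℝ) ≤ (1-θ-ε) * Real.logb 2 n + 1 := (Nat.ceil_lt_add_one hLnn).le
  have hpow2 : (2:ℝ)^(k:ℕ) ≤ 2 * (n:ℝ) ^ (1-θ-ε) := by
    have h1 : (2:ℝ)^(k:ℕ) = (2:ℝ) ^ ((k:ℝ)) := (Real.rpow_natCast 2 k).symm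
    have h2 : (2:ℝ) ^ ((k:ℝ)) ≤ (2:ℝ) ^ ((1-θ-ε)*Real.logb 2 n + 1) :=
      Real.rpow_le_rpow_of_exponent_le one_le_two hkle
    have h3 : (2:ℝ) ^ ((1-θ-ε)*Real.logb 2 n + 1)
        = (2:ℝ) ^ ((1-θ-ε)*Real.logb 2 n) * 2 := by
      rw [Real.rpow_add (by norm_num : (0:ℝ) < 2), Real.rpow_one]
    have h4 : (2:ℝ) ^ ((1-θ-ε)*Real.logb 2 n) = (n:ℝ) ^ (1-θ-ε) := by
      rw [mul_comm, Real.rpow_mul (by norm_num : (0:ℝ) ≤ 2),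
        Real.rpow_logb two_pos (by norm_num) hnpos]
    rw [h1]
    rw [h3, h4] at h2
    linarith
  have hmain : (2:ℝ)^(k:ℕ) * (4*D) ≤ (n:ℝ) + 4*D := by
    have hpa : (n:ℝ)^(1-θ-ε) * (n:ℝ)^θ = (n:ℝ)^(1-ε) := by
      rw [← Real.rpow_add hnpos, show (1-θ-ε)+θ = 1-ε by ring]
    have hpb : (n:ℝ)^(1-ε) * (n:ℝ)^ε = (n:ℝ) := by
      rw [← Real.rpow_add hnpos, show (1-ε)+ε = (1:ℝ) by ring, Real.rpow_one]
    have hnθnn : (0:ℝ) ≤ (n:ℝ)^θ := le_trans zero_le_one hnθ1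
    have hn1e : (0:ℝ) ≤ (n:ℝ)^(1-ε) := Real.rpow_nonneg hnpos.le _
    have hn1te : (0:ℝ) ≤ (n:ℝ)^(1-θ-ε) := Real.rpow_nonneg hnpos.le _
    have hp2 : (0:ℝ) < (2:ℝ)^(k:ℕ) := by positivity
    calc (2:ℝ)^(k:ℕ) * (4*D) ≤ 16*C*((n:ℝ)^(1-θ-ε) * (n:ℝ)^θ) := by nlinarith
    _ = 16*C*(n:ℝ)^(1-ε) := by rw [hpa]
    _ ≤ (n:ℝ)^ε * (n:ℝ)^(1-ε) := by nlinarith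
    _ = (n:ℝ) := by rw [mul_comm]; exact hpb
    _ ≤ (n:ℝ) + 4*D := by nlinarith
  have hkG : k ≤ G.cliqueNum := clique_lb G D hD1 hlbG k hmain
  have hkGc : k ≤ Gᶜ.cliqueNum := clique_lb Gᶜ D hD1 hlbGc k hmain
  have hkmin : k ≤ min G.cliqueNum (indepNum G) := le_min hkG hkGc
  calc (1-θ-ε) * Real.logb 2 n ≤ (k:ℝ) := Nat.le_ceil _
  _ ≤ _ := by exact_mod_cast hkmin
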